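/- Let p be an odd prime, q a primitive root mod p^2, and q̂ = q^{p-1}. For every sequence (a_n)_{n≥0} in Z_(p), the sequence μ = (μ_i)_{i≥0} defined by μ_i = Σ_{n=0}^i a_n Π_{k=0}^{n-1} (q̂^i - q̂^k) satisfies, for all n ≥ 0, the congruence Σ_{i=0}^n (-1)^{n-i} q̂^{binom(n-i,2)} [n choose i]_{q̂} μ_i ≡ 0 mod p^{δ_p(n)} in Z_(p). -/

import Mathlib

/-- The Gaussian (q-)binomial coefficient, via the Pascal-type recursion. -/
def gaussBinom {R : Type*} [CommRing R] (t : R) : ℕ → ℕ → R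
  | _, 0 => 1
  | 0, _ + 1 => 0
  | n + 1, i + 1 => gaussBinom t n i + t ^ (i + 1) * gaussBinom t n (i + 1)

/-- `x ∈ ℤ_(p)` : a rational is a `p`-local integer iff `p` does not divide its denominator. -/
def inZLoc (p : ℕ) (x : ℚ) : Prop := ¬ (p ∣ x.den)

/-- `x` is a unit of `ℤ_(p)` : `p` divides neither numerator nor denominator. -/
def isUnitZLoc (p : ℕ) (x : ℚ) : Prop := inZLoc p x ∧ ¬ ((p : ℤ) ∣ x.num)

/-- `q` is a primitive root modulo `m`. -/
def IsPrimitiveRootMod (q : ℤ) (m : ℕ) : Prop :=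
  ∃ u : (ZMod m)ˣ, (u : ZMod m) = (q : ZMod m) ∧ ∀ v : (ZMod m)ˣ, v ∈ Subgroup.zpowers u

/-- `δ_p(n) = n + ν_p(n!)`. -/
def deltaP (p n : ℕ) : ℕ := n + (n.factorial).factorization p

/-
Write `φ_m(x) = ∏_{k<m} (x - q̂^k)`, so that `μ_i = Σ_m a_m φ_m(q̂^i)`. By the q-binomial
theorem the weights `(-1)^(n-i) q̂^C(n-i,2) [n choose i]_q̂` of the congruence are the
coefficients of `φ_n`; hence the weighted sum sends `i ↦ (q̂^j)^i` to `φ_n(q̂^j)`, which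
vanishes for `j < n`. Applied to `μ` it therefore kills every `a_m` with `m < n` and leaves
`a_n φ_n(q̂^n) = a_n ∏_{k<n} q̂^k (q̂^(n-k) - 1)`. Since `q` is prime to `p`, Fermat gives
`q̂ ≡ 1 mod p`, and lifting the exponent gives `ν_p(q̂^j - 1) ≥ 1 + ν_p(j)`; summing over
`j = 1, …, n` yields `n + ν_p(n!) = δ_p(n)`.
-/

open Finset Polynomial

section CommRing

variable {R : Type*} [CommRing R] (t : R)

theorem gaussBinom_eq_zero_of_lt : ∀ {n i : ℕ}, n < i → gaussBinom t n i = 0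
  | 0, _ + 1, _ => rfl
  | n + 1, i + 1, h => by
    rw [gaussBinom, gaussBinom_eq_zero_of_lt (by omega), gaussBinom_eq_zero_of_lt (by omega),
      mul_zero, add_zero]

theorem gaussBinom_self : ∀ n : ℕ, gaussBinom t n n = 1
  | 0 => rfl
  | n + 1 => by rw [gaussBinom, gaussBinom_self n, gaussBinom_eq_zero_of_lt t n.lt_succ_self,
      mul_zero, add_zero]

def qDiffCoeff (n i : ℕ) : R := (-1) ^ (n - i) * t ^ (n - i).choose 2 * gaussBinom t n i

theorem qDiffCoeff_self (n : ℕ) : qDiffCoeff t n n = 1 := by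
  simp [qDiffCoeff, gaussBinom_self]

theorem coeff_prod_X_sub_C_pow (n i : ℕ) :
    (∏ k ∈ range n, (X - C (t ^ k))).coeff i = qDiffCoeff t n i := by
  induction n generalizing i with
  | zero => cases i <;> simp [qDiffCoeff, gaussBinom, coeff_one]
  | succ n ih =>
    rw [prod_range_succ]
    cases i with
    | zero =>
      rw [mul_coeff_zero, ih, coeff_sub, coeff_X_zero, coeff_C_zero]
      simp only [qDiffCoeff, gaussBinom, Nat.sub_zero, Nat.choose_succ_succ', Nat.choose_one_right,
        pow_succ, pow_add]
      ring
    | succ i =>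
      rw [coeff_mul_X_sub_C, ih, ih]
      rcases le_or_gt n i with h | h
      · simp [qDiffCoeff, gaussBinom, gaussBinom_eq_zero_of_lt t (show n < i + 1 by omega),
          Nat.sub_eq_zero_of_le h, Nat.sub_eq_zero_of_le (h.trans i.le_succ)]
      · obtain ⟨d, rfl⟩ := Nat.exists_eq_add_of_lt h
        simp only [qDiffCoeff, gaussBinom, show i + d + 1 - i = d + 1 by omega,
          show i + d + 1 + 1 - (i + 1) = d + 1 by omega, show i + d + 1 - (i + 1) = d by omega,
          Nat.choose_succ_succ', Nat.choose_one_right, pow_succ, pow_add]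
        ring

theorem prod_sub_pow_eq_sum_qDiffCoeff (x : R) (n : ℕ) :
    ∏ k ∈ range n, (x - t ^ k) = ∑ i ∈ range (n + 1), qDiffCoeff t n i * x ^ i := by
  nontriviality R
  have hdeg : (∏ k ∈ range n, (X - C (t ^ k))).natDegree < n + 1 := by
    rw [natDegree_finsetProd_X_sub_C_eq_card, card_range]
    exact n.lt_succ_self
  simpa only [eval_prod, eval_sub, eval_X, eval_C, coeff_prod_X_sub_C_pow]
    using eval_eq_sum_range' hdeg x

theorem prod_pow_sub_pow_eq_zero_of_lt {i m : ℕ} (h : i < m) :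
    ∏ k ∈ range m, (t ^ i - t ^ k) = 0 :=
  prod_eq_zero (mem_range.2 h) (sub_self _)

theorem sum_qDiffCoeff_mul_prod_pow_sub_pow {m n : ℕ} (hmn : m ≤ n) :
    ∑ i ∈ range (n + 1), qDiffCoeff t n i * ∏ k ∈ range m, (t ^ i - t ^ k)
      = if m = n then ∏ k ∈ range n, (t ^ n - t ^ k) else 0 := by
  calc _ = ∑ i ∈ range (n + 1), qDiffCoeff t n i *
          ∑ j ∈ range (m + 1), qDiffCoeff t m j * (t ^ j) ^ i := by
        simp only [prod_sub_pow_eq_sum_qDiffCoeff t _ m, ← pow_mul, mul_comm]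
    _ = ∑ j ∈ range (m + 1), qDiffCoeff t m j * ∏ k ∈ range n, (t ^ j - t ^ k) := by
        simp only [prod_sub_pow_eq_sum_qDiffCoeff t _ n, mul_sum]
        rw [sum_comm]
        exact sum_congr rfl fun _ _ => sum_congr rfl fun _ _ => by ring
    _ = _ := by
        split_ifs with h
        · subst h
          rw [sum_eq_single_of_mem m (self_mem_range_succ m) fun j hj hjm => by
            rw [prod_pow_sub_pow_eq_zero_of_lt t (by grind), mul_zero], qDiffCoeff_self, one_mul]
        · exact sum_eq_zero fun j hj => by
            rw [prod_pow_sub_pow_eq_zero_of_lt t (by grind), mul_zero]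

theorem sum_qDiffCoeff_mul_sum_prod_pow_sub_pow (a : ℕ → R) (n : ℕ) :
    ∑ i ∈ range (n + 1), qDiffCoeff t n i *
        ∑ m ∈ range (i + 1), a m * ∏ k ∈ range m, (t ^ i - t ^ k)
      = a n * ∏ k ∈ range n, (t ^ n - t ^ k) := by
  have hextend : ∀ i ∈ range (n + 1),
      ∑ m ∈ range (i + 1), a m * ∏ k ∈ range m, (t ^ i - t ^ k)
        = ∑ m ∈ range (n + 1), a m * ∏ k ∈ range m, (t ^ i - t ^ k) := fun i hi =>
    sum_subset (range_subset_range.2 (by grind)) fun m _ hm => by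
      rw [prod_pow_sub_pow_eq_zero_of_lt t (by grind), mul_zero]
  calc _ = ∑ m ∈ range (n + 1), a m *
          ∑ i ∈ range (n + 1), qDiffCoeff t n i * ∏ k ∈ range m, (t ^ i - t ^ k) := by
        rw [sum_congr rfl fun i hi => by rw [hextend i hi]]
        simp only [mul_sum]
        rw [sum_comm]
        exact sum_congr rfl fun _ _ => sum_congr rfl fun _ _ => by ring
    _ = _ := by
        rw [sum_congr rfl fun m hm => by
          rw [sum_qDiffCoeff_mul_prod_pow_sub_pow t (Nat.lt_succ_iff.1 (mem_range.1 hm))]]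
        simp [mul_ite]

theorem prod_pow_sub_pow_eq_mul (Q : R) (n : ℕ) :
    ∏ k ∈ range n, (Q ^ n - Q ^ k)
      = (∏ k ∈ range n, Q ^ k) * ∏ j ∈ range n, (Q ^ (j + 1) - 1) := by
  rw [← prod_range_reflect (fun j => Q ^ (j + 1) - 1), ← prod_mul_distrib]
  refine prod_congr rfl fun k hk => ?_
  rw [mul_sub, mul_one, ← pow_add, show k + (n - 1 - k + 1) = n by grind]

end CommRing

section Valuation

variable {p : ℕ}

theorem deltaP_succ (n : ℕ) :
    deltaP p (n + 1) = deltaP p n + (1 + (n + 1).factorization p) := by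
  rw [deltaP, deltaP, Nat.factorial_succ,
    Nat.factorization_mul n.succ_ne_zero n.factorial_ne_zero, Finsupp.add_apply]
  ring

theorem pow_one_add_factorization_dvd_pow_sub_one (hp : p.Prime) (hodd : Odd p) {Q : ℤ}
    (hQ : (p : ℤ) ∣ Q - 1) (j : ℕ) : (p : ℤ) ^ (1 + j.factorization p) ∣ Q ^ j - 1 := by
  rcases j.eq_zero_or_pos with rfl | hj
  · simp
  have hQp : ¬ (p : ℤ) ∣ Q := fun h =>
    (Nat.prime_iff_prime_int.1 hp).not_dvd_one (by simpa using dvd_sub h hQ)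
  apply pow_dvd_of_le_emultiplicity
  have hLTE := Int.emultiplicity_pow_sub_pow hp hodd (y := 1) (by simpa using hQ) hQp j
  rw [one_pow] at hLTE
  rw [hLTE, Nat.cast_add, Nat.cast_one, ← Nat.multiplicity_eq_factorization hp hj.ne',
    ← (Nat.finiteMultiplicity_iff.2 ⟨hp.ne_one, hj⟩).emultiplicity_eq_multiplicity]
  exact add_le_add_left (le_emultiplicity_of_pow_dvd (by simpa using hQ)) _

theorem pow_deltaP_dvd_prod_pow_sub_one (hp : p.Prime) (hodd : Odd p) {Q : ℤ}
    (hQ : (p : ℤ) ∣ Q - 1) (n : ℕ) :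
    (p : ℤ) ^ deltaP p n ∣ ∏ j ∈ range n, (Q ^ (j + 1) - 1) := by
  induction n with
  | zero => simp [deltaP]
  | succ n ih =>
    rw [deltaP_succ, pow_add, prod_range_succ]
    exact mul_dvd_mul ih (pow_one_add_factorization_dvd_pow_sub_one hp hodd hQ _)

theorem pow_deltaP_dvd_prod_pow_sub_pow (hp : p.Prime) (hodd : Odd p) {Q : ℤ}
    (hQ : (p : ℤ) ∣ Q - 1) (n : ℕ) :
    (p : ℤ) ^ deltaP p n ∣ ∏ k ∈ range n, (Q ^ n - Q ^ k) := by
  rw [prod_pow_sub_pow_eq_mul]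
  exact dvd_mul_of_dvd_right (pow_deltaP_dvd_prod_pow_sub_one hp hodd hQ n) _

theorem inZLoc.mul_intCast {x : ℚ} (hx : inZLoc p x) (c : ℤ) : inZLoc p (x * c) :=
  fun h => hx (h.trans (by simpa using Rat.mul_den_dvd x c))

end Valuation

theorem IsPrimitiveRootMod.isCoprime {q : ℤ} {m : ℕ} (hq : IsPrimitiveRootMod q m) :
    IsCoprime (m : ℤ) q := by
  obtain ⟨u, hu, -⟩ := hq
  exact (ZMod.coe_int_isUnit_iff_isCoprime q m).1 (hu ▸ u.isUnit)

theorem adams_sums_satisfy_congruences (p : ℕ) (hp : p.Prime) (hodd : Odd p)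
    (q : ℤ) (hq : IsPrimitiveRootMod q (p ^ 2))
    (qh : ℚ) (hqh : qh = (q : ℚ) ^ (p - 1))
    (a : ℕ → ℚ) (ha : ∀ n, inZLoc p (a n))
    (μ : ℕ → ℚ)
    (hμ : ∀ i, μ i = ∑ n ∈ Finset.range (i + 1),
        a n * ∏ k ∈ Finset.range n, (qh ^ i - qh ^ k)) :
    ∀ n, inZLoc p ((∑ i ∈ Finset.range (n + 1),
        (-1) ^ (n - i) * qh ^ Nat.choose (n - i) 2 * gaussBinom qh n i * μ i) /
      (p : ℚ) ^ deltaP p n) := by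
  intro n
  have hqp : IsCoprime q p :=
    ((IsCoprime.pow_left_iff two_pos).1 (by simpa using hq.isCoprime)).symm
  have hQ : (p : ℤ) ∣ q ^ (p - 1) - 1 := (Int.ModEq.pow_card_sub_one_eq_one hp hqp).symm.dvd
  obtain ⟨c, hc⟩ := pow_deltaP_dvd_prod_pow_sub_pow hp hodd hQ n
  have hsum : ∑ i ∈ range (n + 1), qDiffCoeff qh n i * μ i
      = a n * ((p : ℚ) ^ deltaP p n * c) := by
    simp only [hμ]
    rw [sum_qDiffCoeff_mul_sum_prod_pow_sub_pow, hqh]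
    exact_mod_cast congrArg (a n * ·) (congrArg (Int.cast : ℤ → ℚ) hc)
  change inZLoc p ((∑ i ∈ range (n + 1), qDiffCoeff qh n i * μ i) / _)
  rw [hsum, mul_left_comm, mul_div_cancel_left₀ _ (pow_ne_zero _ (Nat.cast_ne_zero.2 hp.ne_zero))]
  exact (ha n).mul_intCast c
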